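/- Let K be a field of characteristic zero. Let C be the cochain complex of K-vector spaces with C^0 = K·u, C^n = K·a_n ⊕ K·b_n ⊕ K·c_n ⊕ K·e_n (four-dimensional) for every n ≥ 1, C^n = 0 for n < 0, and differential d : C^n → C^{n+1} determined by: d(u) = b_1 − c_1; for n odd: d(a_n) = a_{n+1}, d(b_n) = −a_{n+1}, d(c_n) = −a_{n+1}, d(e_n) = b_{n+1} − c_{n+1} − e_{n+1}; for n even (n ≥ 2): d(a_n) = 0, d(b_n) = a_{n+1} + b_{n+1}, d(c_n) = a_{n+1} + c_{n+1}, d(e_n) = b_{n+1} − c_{n+1}. Then d ∘ d = 0, H^n(C) = 0 for all n ≠ 1, and H^1(C) is one-dimensional, spanned by the class of the cocycle 2a_1 + b_1 + c_1. -/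
import Mathlib


/-- Let `K` be a field of characteristic zero.  Let `C` be the cochain complex
of `K`-vector spaces with `C^0 = K·u`, `C^n = K·a_n ⊕ K·b_n ⊕ K·c_n ⊕ K·e_n` (four-dimensional)
for every `n ≥ 1`, `C^n = 0` for `n < 0`, and differential `d : C^n → C^{n+1}` determined by:
`d(u) = b_1 − c_1`; for `n` odd: `d(a_n) = a_{n+1}`, `d(b_n) = −a_{n+1}`, `d(c_n) = −a_{n+1}`,
`d(e_n) = b_{n+1} − c_{n+1} − e_{n+1}`; for `n` even (`n ≥ 2`): `d(a_n) = 0`,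
`d(b_n) = a_{n+1} + b_{n+1}`, `d(c_n) = a_{n+1} + c_{n+1}`, `d(e_n) = b_{n+1} − c_{n+1}`.
Then `d ∘ d = 0`, `H^n(C) = 0` for all `n ≠ 1`, and `H^1(C)` is one-dimensional, spanned by the
class of the cocycle `2a_1 + b_1 + c_1`.  (Degree `1` is written as `0 + 1` so that the degrees
of the various elements match syntactically.) -/
theorem stmt3 (K : Type*) [Field K] [CharZero K]
    (V : ℤ → Type*) [∀ n, AddCommGroup (V n)] [∀ n, Module K (V n)]
    (d : ∀ n : ℤ, V n →ₗ[K] V (n + 1))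
    (u : V 0) (a b c e : ∀ n : ℤ, V n)
    (hneg : ∀ n : ℤ, n < 0 → Subsingleton (V n))
    (hu : u ≠ 0 ∧ Submodule.span K {u} = ⊤)
    (hbasis : ∀ n : ℤ, 1 ≤ n →
      LinearIndependent K ![a n, b n, c n, e n] ∧
        Submodule.span K {a n, b n, c n, e n} = ⊤)
    (hdu : d 0 u = b (0 + 1) - c (0 + 1))
    (hodd : ∀ n : ℤ, 1 ≤ n → Odd n →
      d n (a n) = a (n + 1) ∧ d n (b n) = -a (n + 1) ∧ d n (c n) = -a (n + 1) ∧
        d n (e n) = b (n + 1) - c (n + 1) - e (n + 1))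
    (heven : ∀ n : ℤ, 2 ≤ n → Even n →
      d n (a n) = 0 ∧ d n (b n) = a (n + 1) + b (n + 1) ∧
        d n (c n) = a (n + 1) + c (n + 1) ∧ d n (e n) = b (n + 1) - c (n + 1)) :
    (∀ n : ℤ, (d (n + 1)).comp (d n) = 0) ∧
    (∀ n : ℤ, n ≠ 0 → LinearMap.ker (d (n + 1)) = LinearMap.range (d n)) ∧
    (d (0 + 1) ((2 : K) • a (0 + 1) + b (0 + 1) + c (0 + 1)) = 0 ∧
      (2 : K) • a (0 + 1) + b (0 + 1) + c (0 + 1) ∉ LinearMap.range (d 0) ∧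
      ∀ x ∈ LinearMap.ker (d (0 + 1)),
        ∃ (k : K) (y : V 0),
          x = k • ((2 : K) • a (0 + 1) + b (0 + 1) + c (0 + 1)) + d 0 y) := by
  
  -- representation lemmas
  have repr0 : ∀ x : V 0, ∃ k : K, x = k • u := by
    intro x
    have hx : x ∈ Submodule.span K {u} := by rw [hu.2]; trivial
    obtain ⟨k, hk⟩ := Submodule.mem_span_singleton.1 hx
    exact ⟨k, hk.symm⟩
  have repr : ∀ n : ℤ, 1 ≤ n → ∀ x : V n, ∃ p q r s : K,
      x = p • a n + q • b n + r • c n + s • e n := by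
    intro n hn x
    have hx : x ∈ Submodule.span K {a n, b n, c n, e n} := by rw [(hbasis n hn).2]; trivial
    rw [Submodule.mem_span_insert] at hx
    obtain ⟨p, x1, hx1, rfl⟩ := hx
    rw [Submodule.mem_span_insert] at hx1
    obtain ⟨q, x2, hx2, rfl⟩ := hx1
    rw [Submodule.mem_span_insert] at hx2
    obtain ⟨r, x3, hx3, rfl⟩ := hx2
    obtain ⟨s, rfl⟩ := Submodule.mem_span_singleton.1 hx3
    exact ⟨p, q, r, s, by module⟩
  have indep : ∀ n : ℤ, 1 ≤ n → ∀ p q r s : K,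
      p • a n + q • b n + r • c n + s • e n = 0 → p = 0 ∧ q = 0 ∧ r = 0 ∧ s = 0 := by
    intro n hn p q r s h
    have hli := (hbasis n hn).1
    rw [Fintype.linearIndependent_iff] at hli
    have h4 := hli ![p, q, r, s] (by simpa [Fin.sum_univ_four] using h)
    exact ⟨h4 0, h4 1, h4 2, h4 3⟩
  have part1 : ∀ n : ℤ, (d (n + 1)).comp (d n) = 0 := by
    intro n
    rcases lt_trichotomy n 0 with hn | rfl | hn
    · have := hneg n hn
      apply LinearMap.ext; intro x
      simp [Subsingleton.elim x 0]
    · apply LinearMap.ext; intro x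
      obtain ⟨k, rfl⟩ := repr0 x
      obtain ⟨hda', hdb', hdc', hde'⟩ := hodd (0 + 1) (by norm_num) (by norm_num)
      simp only [LinearMap.comp_apply, LinearMap.zero_apply, map_smul, hdu, map_sub,
        hdb', hdc']
      simp
    · apply LinearMap.ext; intro x
      obtain ⟨p, q, r, s, rfl⟩ := repr n hn x
      rcases Int.even_or_odd n with he | ho
      · have h2 : 2 ≤ n := by obtain ⟨k, hk⟩ := he; omega
        obtain ⟨hda, hdb, hdc, hde⟩ := heven n h2 he
        obtain ⟨hda', hdb', hdc', hde'⟩ := hodd (n + 1) (by omega) (Even.add_one he)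
        simp only [LinearMap.comp_apply, LinearMap.zero_apply, map_add, map_sub, map_smul,
          hda, hdb, hdc, hde, hda', hdb', hdc', hde', map_zero]
        module
      · obtain ⟨hda, hdb, hdc, hde⟩ := hodd n hn ho
        have he' : Even (n + 1) := Odd.add_one ho
        obtain ⟨hda', hdb', hdc', hde'⟩ := heven (n + 1) (by omega) he'
        simp only [LinearMap.comp_apply, LinearMap.zero_apply, map_add, map_sub, map_smul,
          map_neg, hda, hdb, hdc, hde, hda', hdb', hdc', hde', map_zero]
        module
  have hrk : ∀ n : ℤ, LinearMap.range (d n) ≤ LinearMap.ker (d (n + 1)) := by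
    intro n x hx
    obtain ⟨y, rfl⟩ := hx
    simpa using LinearMap.congr_fun (part1 n) y
  have part2 : ∀ n : ℤ, n ≠ 0 → LinearMap.ker (d (n + 1)) = LinearMap.range (d n) := by
    intro n hn0
    refine le_antisymm ?_ (hrk n)
    rcases lt_trichotomy n 0 with hn | rfl | hn
    · rcases eq_or_lt_of_le (by omega : n ≤ -1) with rfl | hn2
      · intro x hx
        obtain ⟨k, rfl⟩ := repr0 x
        have hx0 : d 0 (k • u) = 0 := hx
        rw [map_smul, hdu] at hx0
        have heq : (0 : K) • a (0 + 1) + k • b (0 + 1) + (-k) • c (0 + 1)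
            + (0 : K) • e (0 + 1) = 0 := by
          rw [← hx0]; module
        obtain ⟨-, hk, -, -⟩ := indep (0 + 1) (by norm_num) _ _ _ _ heq
        rw [hk, zero_smul]
        exact Submodule.zero_mem _
      · intro x hx
        have := hneg (n + 1) (by omega)
        rw [Subsingleton.elim x 0]
        exact Submodule.zero_mem _
    · exact absurd rfl hn0
    · intro x hx
      obtain ⟨p, q, r, s, rfl⟩ := repr (n + 1) (by omega) x
      have hx0 : d (n + 1) (p • a (n + 1) + q • b (n + 1) + r • c (n + 1) + s • e (n + 1)) = 0 :=
        hx
      rcases Int.even_or_odd n with he | ho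
      · have h2 : 2 ≤ n := by obtain ⟨k, hk⟩ := he; omega
        obtain ⟨hda, hdb, hdc, hde⟩ := heven n h2 he
        obtain ⟨hda', hdb', hdc', hde'⟩ := hodd (n + 1) (by omega) (Even.add_one he)
        have heq : (p - q - r) • a (n + 1 + 1) + s • b (n + 1 + 1) + (-s) • c (n + 1 + 1)
            + (-s) • e (n + 1 + 1) = 0 := by
          rw [← hx0]
          simp only [map_add, map_sub, map_smul, hda', hdb', hdc', hde']
          module
        obtain ⟨h1, h2', -, -⟩ := indep (n + 1 + 1) (by omega) _ _ _ _ heq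
        refine ⟨q • b n + r • c n, ?_⟩
        rw [map_add, map_smul, map_smul, hdb, hdc]
        have hp : p = q + r := by linear_combination h1
        have hs : s = 0 := h2'
        subst hp hs
        module
      · obtain ⟨hda, hdb, hdc, hde⟩ := hodd n hn ho
        obtain ⟨hda', hdb', hdc', hde'⟩ := heven (n + 1) (by omega) (Odd.add_one ho)
        have heq : (q + r) • a (n + 1 + 1) + (q + s) • b (n + 1 + 1)
            + (r - s) • c (n + 1 + 1) + (0 : K) • e (n + 1 + 1) = 0 := by
          rw [← hx0]
          simp only [map_add, map_sub, map_smul, hda', hdb', hdc', hde', map_zero]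
          module
        obtain ⟨h1, h2', h3, -⟩ := indep (n + 1 + 1) (by omega) _ _ _ _ heq
        refine ⟨p • a n + q • e n, ?_⟩
        rw [map_add, map_smul, map_smul, hda, hde]
        have hr : r = -q := by linear_combination h1
        have hs : s = -q := by linear_combination h2'
        subst hr hs
        module
  obtain ⟨hda1, hdb1, hdc1, hde1⟩ := hodd (0 + 1) (by norm_num) (by norm_num)
  refine ⟨part1, part2, ?_, ?_, ?_⟩
  · rw [map_add, map_add, map_smul, hda1, hdb1, hdc1]
    module
  · rintro ⟨y, hy⟩
    obtain ⟨k, rfl⟩ := repr0 y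
    rw [map_smul, hdu] at hy
    have heq : (2 : K) • a (0 + 1) + (1 - k) • b (0 + 1) + (1 + k) • c (0 + 1)
        + (0 : K) • e (0 + 1) = 0 := by
      have h2 : (2 : K) • a (0 + 1) + (1 - k) • b (0 + 1) + (1 + k) • c (0 + 1)
          + (0 : K) • e (0 + 1)
          = ((2 : K) • a (0 + 1) + b (0 + 1) + c (0 + 1)) - k • (b (0 + 1) - c (0 + 1)) := by
        module
      rw [h2, ← hy, sub_self]
    obtain ⟨h1, -, -, -⟩ := indep (0 + 1) (by norm_num) _ _ _ _ heq
    exact two_ne_zero h1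
  · intro x hx
    obtain ⟨p, q, r, s, rfl⟩ := repr (0 + 1) (by norm_num) x
    have hx0 : d (0 + 1)
        (p • a (0 + 1) + q • b (0 + 1) + r • c (0 + 1) + s • e (0 + 1)) = 0 := hx
    have heq : (p - q - r) • a (0 + 1 + 1) + s • b (0 + 1 + 1) + (-s) • c (0 + 1 + 1)
        + (-s) • e (0 + 1 + 1) = 0 := by
      rw [← hx0]
      simp only [map_add, map_sub, map_smul, hda1, hdb1, hdc1, hde1]
      module
    obtain ⟨h1, h2', -, -⟩ := indep (0 + 1 + 1) (by norm_num) _ _ _ _ heq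
    refine ⟨(q + r) / 2, ((q - r) / 2) • u, ?_⟩
    rw [map_smul, hdu]
    have hp : p = q + r := by linear_combination h1
    have hs : s = 0 := h2'
    subst hp hs
    match_scalars <;> ring
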